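/- Let w = ωtr with 0 ≤ w ≤ tr integers. For any s ∈ F_2^r, the number N_w of vectors x ∈ F_2^{tr} of Hamming weight exactly w satisfying x H_{tr}^T = s is at most √(2tr) · ((1 + |1-2ω|^t)/2)^r · C(tr, w), where H_{tr} is the concatenation of t copies of the r×r identity matrix. -/

import Mathlib

/-
Weight each word of `F_2^{tr}` by `p^{wt x} (1-p)^{tr - wt x}` with `p = ω`. Since the syndrome
equations act on disjoint columns, the total weight of the coset `σ⁻¹(s)` factors over the `r`
columns, and each factor is the weight of a parity class of `F_2^t`, which is
`(1 ± (1-2p)^t)/2 ≤ (1 + |1-2ω|^t)/2`. As every word of weight `w` carries weight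
`ω^w (1-ω)^{tr-w}`, the count is at most `((1 + |1-2ω|^t)/2)^r / (ω^w (1-ω)^{tr-w})`, and
Stirling's formula bounds the denominator below by `1 / (√(2tr) C(tr, w))`.
-/

open Finset

/-- Hamming weight of a vector of `F_2^{tr}` written as `t` blocks of length `r`. -/
def blockWeight {t r : ℕ} (x : Fin t → Fin r → ZMod 2) : ℕ :=
  (Finset.univ.filter (fun q : Fin t × Fin r => x q.1 q.2 ≠ 0)).card

/-- Syndrome with respect to `H_{tr} = [I_r | I_r | ⋯ | I_r]` (`t` copies of `I_r`). -/
def blockSyndrome {t r : ℕ} (x : Fin t → Fin r → ZMod 2) : Fin r → ZMod 2 :=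
  fun i => ∑ k : Fin t, x k i

lemma AddChar.map_sum_eq_prod {A M ι : Type*} [AddCommMonoid A] [CommMonoid M] (ψ : AddChar A M)
    (s : Finset ι) (g : ι → A) : ψ (∑ i ∈ s, g i) = ∏ i ∈ s, ψ (g i) := by
  classical
  induction s using Finset.induction_on with
  | empty => simp
  | insert a s ha ih => rw [sum_insert ha, prod_insert ha, ψ.map_add_eq_mul, ih]

section ParitySum

variable {R : Type*} [CommRing R]

def paritySum (f : ZMod 2 → R) (t : ℕ) (b : ZMod 2) : R :=
  ∑ v : Fin t → ZMod 2 with ∑ k, v k = b, ∏ k, f (v k)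

lemma sum_zmod_two (g : ZMod 2 → R) : ∑ b, g b = g 0 + g 1 := Fin.sum_univ_two g

lemma sum_mul_prod_eq_paritySum (f h : ZMod 2 → R) (t : ℕ) :
    ∑ v : Fin t → ZMod 2, h (∑ k, v k) * ∏ k, f (v k) =
      h 0 * paritySum f t 0 + h 1 * paritySum f t 1 := by
  rw [← sum_fiberwise univ (fun v : Fin t → ZMod 2 => ∑ k, v k), sum_zmod_two]
  simp only [paritySum, mul_sum]
  congr 1 <;> exact sum_congr rfl fun v hv => by rw [(mem_filter.mp hv).2]

lemma paritySum_zero_add_paritySum_one (f : ZMod 2 → R) (t : ℕ) :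
    paritySum f t 0 + paritySum f t 1 = (f 0 + f 1) ^ t := by
  simpa [← sum_zmod_two, Fintype.sum_pow] using (sum_mul_prod_eq_paritySum f 1 t).symm

lemma paritySum_zero_sub_paritySum_one (f : ZMod 2 → R) (t : ℕ) :
    paritySum f t 0 - paritySum f t 1 = (f 0 - f 1) ^ t := by
  let ψ := AddChar.zmodChar 2 (neg_one_sq (R := R))
  have hψ0 : ψ 0 = 1 := ψ.map_zero_eq_one
  have hψ1 : ψ 1 = -1 := pow_one (-1 : R)
  calc paritySum f t 0 - paritySum f t 1 = ψ 0 * paritySum f t 0 + ψ 1 * paritySum f t 1 := by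
        rw [hψ0, hψ1]; ring
    _ = ∑ v : Fin t → ZMod 2, ψ (∑ k, v k) * ∏ k, f (v k) :=
        (sum_mul_prod_eq_paritySum f ψ t).symm
    _ = ∑ v : Fin t → ZMod 2, ∏ k, ψ (v k) * f (v k) :=
        sum_congr rfl fun v _ => by rw [ψ.map_sum_eq_prod, prod_mul_distrib]
    _ = (f 0 - f 1) ^ t := by
        rw [← Fintype.sum_pow (fun b => ψ b * f b), sum_zmod_two, hψ0, hψ1]; ring

end ParitySum

lemma paritySum_le (f : ZMod 2 → ℝ) (t : ℕ) (b : ZMod 2) :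
    paritySum f t b ≤ ((f 0 + f 1) ^ t + |f 0 - f 1| ^ t) / 2 := by
  have hadd := paritySum_zero_add_paritySum_one f t
  have hsub := paritySum_zero_sub_paritySum_one f t
  obtain ⟨hlo, hhi⟩ := abs_le.mp (abs_pow (f 0 - f 1) t).le
  obtain rfl | rfl : b = 0 ∨ b = 1 := by decide +revert
  all_goals linarith

section BlockWords

variable {t r : ℕ}

lemma sum_blockSyndrome_eq_prod_paritySum {R : Type*} [CommRing R] (f : ZMod 2 → R)
    (s : Fin r → ZMod 2) :
    ∑ x : Fin t → Fin r → ZMod 2 with blockSyndrome x = s, ∏ i, ∏ k, f (x k i) =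
      ∏ i, paritySum f t (s i) := by
  simp only [paritySum]
  rw [prod_univ_sum]
  refine sum_nbij' (fun x i k => x k i) (fun y k i => y i k) ?_ ?_ (fun _ _ => rfl)
    (fun _ _ => rfl) (fun _ _ => rfl)
  · intro x hx
    simpa [Fintype.mem_piFinset, blockSyndrome, funext_iff] using hx
  · intro y hy
    simpa [Fintype.mem_piFinset, blockSyndrome, funext_iff] using hy

lemma prod_eq_pow_blockWeight {M : Type*} [CommMonoid M] (f : ZMod 2 → M)
    (x : Fin t → Fin r → ZMod 2) :
    ∏ i, ∏ k, f (x k i) = f 1 ^ blockWeight x * f 0 ^ (t * r - blockWeight x) := by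
  have hcard := card_filter_add_card_filter_not
    (s := (univ : Finset (Fin t × Fin r))) (fun q => x q.1 q.2 ≠ 0)
  rw [card_univ, Fintype.card_prod, Fintype.card_fin, Fintype.card_fin] at hcard
  rw [prod_comm, ← Fintype.prod_prod_type' (fun k i => f (x k i)),
    ← prod_filter_mul_prod_filter_not univ (fun q : Fin t × Fin r => x q.1 q.2 ≠ 0)]
  have one_of_ne (b : ZMod 2) : b ≠ 0 → b = 1 := by decide +revert
  rw [prod_eq_pow_card fun q hq => congrArg f (one_of_ne _ (mem_filter.mp hq).2),
    prod_eq_pow_card fun q hq => congrArg f (not_not.mp (mem_filter.mp hq).2), blockWeight]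
  congr 2
  simp only [ne_eq, not_not] at hcard ⊢
  omega

end BlockWords

lemma card_weight_syndrome_mul_le {t r : ℕ} (w : ℕ) (s : Fin r → ZMod 2) {p : ℝ} (hp0 : 0 ≤ p)
    (hp1 : p ≤ 1) :
    (#{x : Fin t → Fin r → ZMod 2 | blockWeight x = w ∧ blockSyndrome x = s} : ℝ) *
        (p ^ w * (1 - p) ^ (t * r - w)) ≤ ((1 + |1 - 2 * p| ^ t) / 2) ^ r := by
  set f : ZMod 2 → ℝ := fun b => if b = 0 then 1 - p else p with hf
  have hf0 : f 0 = 1 - p := if_pos rfl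
  have hf1 : f 1 = p := if_neg one_ne_zero
  have hf_nonneg (b : ZMod 2) : 0 ≤ f b := by
    simp only [hf]; split_ifs <;> linarith
  calc (#{x : Fin t → Fin r → ZMod 2 | blockWeight x = w ∧ blockSyndrome x = s} : ℝ) *
          (p ^ w * (1 - p) ^ (t * r - w))
      = ∑ x : Fin t → Fin r → ZMod 2 with blockWeight x = w ∧ blockSyndrome x = s,
          ∏ i, ∏ k, f (x k i) := by
        rw [sum_congr rfl fun x hx => by rw [prod_eq_pow_blockWeight, (mem_filter.mp hx).2.1],
          sum_const, nsmul_eq_mul, hf0, hf1]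
    _ ≤ ∑ x : Fin t → Fin r → ZMod 2 with blockSyndrome x = s, ∏ i, ∏ k, f (x k i) :=
        sum_le_sum_of_subset_of_nonneg (monotone_filter_right _ fun _ _ hx => hx.2)
          fun _ _ _ => prod_nonneg fun _ _ => prod_nonneg fun _ _ => hf_nonneg _
    _ = ∏ i, paritySum f t (s i) := sum_blockSyndrome_eq_prod_paritySum f s
    _ ≤ ∏ _i : Fin r, ((f 0 + f 1) ^ t + |f 0 - f 1| ^ t) / 2 :=
        prod_le_prod (fun _ _ => sum_nonneg fun _ _ => prod_nonneg fun _ _ => hf_nonneg _)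
          fun i _ => paritySum_le f t (s i)
    _ = ((1 + |1 - 2 * p| ^ t) / 2) ^ r := by
        rw [prod_const, card_univ, Fintype.card_fin, hf0, hf1, sub_add_cancel, one_pow,
          show 1 - p - p = 1 - 2 * p by ring]

namespace Stirling
open Real Nat

lemma factorial_eq_stirlingSeq_mul {n : ℕ} (hn : n ≠ 0) :
    (n ! : ℝ) = stirlingSeq n * (√(2 * n) * (n / exp 1) ^ n) := by
  rw [stirlingSeq, div_mul_cancel₀]
  positivity

lemma stirlingSeq_le_stirlingSeq_two {n : ℕ} (hn : 2 ≤ n) : stirlingSeq n ≤ stirlingSeq 2 := by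
  obtain ⟨m, rfl⟩ := Nat.exists_eq_add_of_le' (by omega : 1 ≤ n)
  exact stirlingSeq'_antitone (by omega : 1 ≤ m)

lemma stirlingSeq_two_sq_le : stirlingSeq 2 ^ 2 ≤ 2 * √π := by
  have h2 : stirlingSeq 2 = exp 1 ^ 2 / 4 := by
    rw [stirlingSeq, show √(2 * ((2 : ℕ) : ℝ)) = 2 by norm_num]
    field_simp
    norm_num
  have he : exp 1 ^ 4 ≤ 2.7182818286 ^ 4 :=
    pow_le_pow_left₀ (exp_pos 1).le exp_one_lt_d9.le 4
  have hpi : 1.73 ≤ √π := le_sqrt_of_sq_le (by linarith [pi_gt_three])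
  rw [h2]
  linarith

end Stirling

open Real Nat Stirling in
lemma pow_le_sqrt_mul_choose_mul_of_two_le {a b : ℕ} (ha : 2 ≤ a) (hb : 2 ≤ b) :
    ((a + b : ℕ) : ℝ) ^ (a + b) ≤
      √(2 * (a + b : ℕ)) * (a + b).choose a * (a : ℝ) ^ a * (b : ℝ) ^ b := by
  set n := a + b with hn
  have hsa := stirlingSeq_le_stirlingSeq_two ha
  have hsb := stirlingSeq_le_stirlingSeq_two hb
  have hsa0 : 0 ≤ stirlingSeq a := (sqrt_pi_le_stirlingSeq (by omega)).trans' (by positivity)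
  have hsb0 : 0 ≤ stirlingSeq b := (sqrt_pi_le_stirlingSeq (by omega)).trans' (by positivity)
  have hsn := sqrt_pi_le_stirlingSeq (n := n) (by omega)
  have hsqrt : √(2 * a) * √(2 * b) ≤ (n : ℝ) := by
    rw [← sqrt_mul (by positivity), sqrt_le_left (by positivity)]
    push_cast [hn]
    nlinarith [sq_nonneg ((a : ℝ) - b)]
  have key : stirlingSeq a * stirlingSeq b * (√(2 * a) * √(2 * b)) ≤ 2 * n * stirlingSeq n := by
    calc stirlingSeq a * stirlingSeq b * (√(2 * a) * √(2 * b))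
        ≤ stirlingSeq 2 ^ 2 * n := by
          have hs2 : 0 ≤ stirlingSeq 2 := hsa0.trans hsa
          rw [sq]; gcongr
      _ ≤ 2 * √π * n := by gcongr; exact stirlingSeq_two_sq_le
      _ ≤ 2 * n * stirlingSeq n := by nlinarith
  have hchoose : ((n.choose a : ℕ) : ℝ) * a ! * b ! = n ! := by
    rw [hn, Nat.choose_symm_add]; exact_mod_cast Nat.add_choose_mul_factorial_mul_factorial a b
  have hfa := factorial_eq_stirlingSeq_mul (n := a) (by omega)
  have hfb := factorial_eq_stirlingSeq_mul (n := b) (by omega)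
  have hfn := factorial_eq_stirlingSeq_mul (n := n) (by omega)
  have hsq : √(2 * (n : ℝ)) ^ 2 = 2 * n := sq_sqrt (by positivity)
  have hEn : exp 1 ^ n = exp 1 ^ a * exp 1 ^ b := pow_add _ a b
  rw [← mul_le_mul_iff_of_pos_right (by positivity : (0 : ℝ) < a ! * b !)]
  calc (n : ℝ) ^ n * (a ! * b !)
      = (n ^ n * a ^ a * b ^ b / exp 1 ^ n) *
          (stirlingSeq a * stirlingSeq b * (√(2 * a) * √(2 * b))) := by
        rw [hfa, hfb, div_pow, div_pow, hEn]; field_simp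
    _ ≤ (n ^ n * a ^ a * b ^ b / exp 1 ^ n) * (2 * n * stirlingSeq n) := by gcongr
    _ = √(2 * n) * a ^ a * b ^ b * (stirlingSeq n * (√(2 * n) * (n / exp 1) ^ n)) := by
        rw [div_pow]
        linear_combination (-(n ^ n * a ^ a * b ^ b / exp 1 ^ n * stirlingSeq n)) * hsq
    _ = √(2 * n) * n.choose a * a ^ a * b ^ b * (a ! * b !) := by
        rw [← hfn, ← hchoose]; ring

-- The case `a = 1` of the estimate below: the Stirling argument above fails there, since
-- `stirlingSeq 1 * stirlingSeq 2 > 2 * √π`.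
open Real in
lemma add_one_pow_le_sqrt_mul_pow (b : ℕ) : ((b : ℝ) + 1) ^ b ≤ √(2 * (b + 1)) * b ^ b := by
  rw [← sqrt_sq (by positivity : (0 : ℝ) ≤ b ^ b), ← sqrt_mul (by positivity)]
  apply le_sqrt_of_sq_le
  rcases lt_or_ge b 3 with hb | hb
  · interval_cases b <;> norm_num
  have hb0 : (0 : ℝ) < b := by positivity
  have hsplit : ((b : ℝ) + 1) ^ b = (1 + (b : ℝ)⁻¹) ^ b * b ^ b := by
    rw [← mul_pow, add_mul, inv_mul_cancel₀ hb0.ne', one_mul, add_comm]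
  have he : (1 + (b : ℝ)⁻¹) ^ b ≤ exp 1 := one_add_inv_pow_le_exp
  have he2 : exp 1 ^ 2 ≤ 2 * (b + 1) := by
    have : (3 : ℝ) ≤ b := by exact_mod_cast hb
    nlinarith [exp_one_lt_d9, exp_pos 1]
  rw [hsplit, mul_pow]
  gcongr
  calc ((1 + (b : ℝ)⁻¹) ^ b) ^ 2 ≤ exp 1 ^ 2 := by gcongr
    _ ≤ 2 * ((b : ℝ) + 1) := he2

theorem pow_le_sqrt_mul_choose_mul_pow_mul_pow {a b : ℕ} (hab : a + b ≠ 0) :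
    ((a + b : ℕ) : ℝ) ^ (a + b) ≤
      √(2 * (a + b : ℕ)) * (a + b).choose a * (a : ℝ) ^ a * (b : ℝ) ^ b := by
  wlog hle : a ≤ b generalizing a b
  · have := this (a := b) (b := a) (by omega) (by omega)
    rwa [add_comm b a, ← Nat.choose_symm_add, mul_right_comm _ ((b : ℝ) ^ b)] at this
  obtain rfl | rfl | ha : a = 0 ∨ a = 1 ∨ 2 ≤ a := by omega
  · simp only [zero_add, Nat.choose_zero_right, Nat.cast_one, mul_one, pow_zero]
    refine le_mul_of_one_le_left (by positivity) (Real.one_le_sqrt.mpr ?_)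
    have : (1 : ℝ) ≤ b := by exact_mod_cast Nat.one_le_iff_ne_zero.mpr (by omega)
    linarith
  · rw [add_comm 1 b, Nat.choose_one_right]
    calc (((b + 1 : ℕ) : ℝ)) ^ (b + 1) = ((b : ℝ) + 1) ^ b * (b + 1) := by push_cast; ring
      _ ≤ √(2 * (b + 1)) * b ^ b * (b + 1) := by gcongr; exact add_one_pow_le_sqrt_mul_pow b
      _ = _ := by push_cast; ring
  · exact pow_le_sqrt_mul_choose_mul_of_two_le ha (by omega)

lemma one_le_sqrt_mul_choose_mul_pow_mul_pow {n w : ℕ} (hn : n ≠ 0) (hw : w ≤ n) :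
    1 ≤ √(2 * n) * n.choose w * (((w : ℝ) / n) ^ w * (1 - (w : ℝ) / n) ^ (n - w)) := by
  obtain ⟨m, rfl⟩ := Nat.exists_eq_add_of_le hw
  have hN : (0 : ℝ) < ((w + m : ℕ) : ℝ) := by positivity
  have hq : 1 - (w : ℝ) / (w + m : ℕ) = m / (w + m : ℕ) := by
    field_simp; push_cast; ring
  rw [hq, Nat.add_sub_cancel_left, div_pow, div_pow]
  calc (1 : ℝ) = ((w + m : ℕ) : ℝ) ^ (w + m) / ((w + m : ℕ) : ℝ) ^ (w + m) :=
        (div_self (by positivity)).symm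
    _ ≤ (√(2 * (w + m : ℕ)) * (w + m).choose w * (w : ℝ) ^ w * (m : ℝ) ^ m) /
          ((w + m : ℕ) : ℝ) ^ (w + m) := by
        gcongr; exact pow_le_sqrt_mul_choose_mul_pow_mul_pow hn
    _ = _ := by rw [pow_add]; field_simp

theorem count_weight_w_syndrome_le (r t w : ℕ) (hr : 0 < r) (ht : 0 < t)
    (hw : w ≤ t * r) (s : Fin r → ZMod 2) :
    ((Finset.univ.filter
        (fun x : Fin t → Fin r → ZMod 2 => blockWeight x = w ∧ blockSyndrome x = s)).card : ℝ) ≤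
      Real.sqrt (2 * t * r) *
        ((1 + |1 - 2 * ((w : ℝ) / (t * r))| ^ t) / 2) ^ r * ((t * r).choose w) := by
  have hn : t * r ≠ 0 := (Nat.mul_pos ht hr).ne'
  set p : ℝ := (w : ℝ) / (t * r)
  have hp0 : 0 ≤ p := by positivity
  have hp1 : p ≤ 1 := div_le_one_of_le₀ (by exact_mod_cast hw) (by positivity)
  have hcount := card_weight_syndrome_mul_le (t := t) w s hp0 hp1
  have hentropy := one_le_sqrt_mul_choose_mul_pow_mul_pow hn hw
  rw [Nat.cast_mul, ← mul_assoc (2 : ℝ)] at hentropy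
  calc _ ≤ (#{x : Fin t → Fin r → ZMod 2 | blockWeight x = w ∧ blockSyndrome x = s} : ℝ) *
          (√(2 * t * r) * (t * r).choose w * (p ^ w * (1 - p) ^ (t * r - w))) :=
        le_mul_of_one_le_right (Nat.cast_nonneg _) hentropy
    _ = √(2 * t * r) * (t * r).choose w *
          ((#{x : Fin t → Fin r → ZMod 2 | blockWeight x = w ∧ blockSyndrome x = s} : ℝ) *
            (p ^ w * (1 - p) ^ (t * r - w))) := by ring
    _ ≤ √(2 * t * r) * (t * r).choose w * ((1 + |1 - 2 * p| ^ t) / 2) ^ r := by gcongr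
    _ = _ := by ring
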